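/- Let X = W ⊕_a Z be the absolute sum of real Banach spaces W and Z with respect to an absolute norm N which is of type 1 or of type ∞ (so W is an absolute summand of X of type 1 or ∞). If W ⊕_a Z has the Bishop–Phelps–Bollobás property for numerical radius (BPBp-nu), then W has the BPBp-nu. -/

import Mathlib

open Filter Topology

/-- `N` is an absolute norm on `ℝ²`: a norm with `N(1,0)=N(0,1)=1` and
`N(s,t)=N(|s|,|t|)`. -/
structure IsAbsoluteNorm (N : ℝ → ℝ → ℝ) : Prop where
  nonneg : ∀ s t : ℝ, 0 ≤ N s t
  eq_zero_iff : ∀ s t : ℝ, N s t = 0 ↔ s = 0 ∧ t = 0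
  triangle : ∀ s₁ t₁ s₂ t₂ : ℝ, N (s₁ + s₂) (t₁ + t₂) ≤ N s₁ t₁ + N s₂ t₂
  smul : ∀ c s t : ℝ, N (c * s) (c * t) = |c| * N s t
  one_zero : N 1 0 = 1
  zero_one : N 0 1 = 1
  abs_eq : ∀ s t : ℝ, N s t = N |s| |t|

/-- An absolute norm is of type 1 if `|x| + K|y| ≤ N(x,y)` for some `K > 0`. -/
def AbsNormTypeOne (N : ℝ → ℝ → ℝ) : Prop :=
  ∃ K : ℝ, 0 < K ∧ ∀ x y : ℝ, |x| + K * |y| ≤ N x y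

/-- An absolute norm is of type ∞ if `N(1,b₀) = 1` for some `b₀ > 0`. -/
def AbsNormTypeInfty (N : ℝ → ℝ → ℝ) : Prop :=
  ∃ b₀ : ℝ, 0 < b₀ ∧ N 1 b₀ = 1

/-- The numerical radius of a bounded linear operator on `X`:
`v(T) = sup {|x*(T x)| : ‖x‖ = ‖x*‖ = 1, x*(x) = 1}`. -/
noncomputable def NumRadius {X : Type*} [NormedAddCommGroup X] [NormedSpace ℝ X]
    (T : X →L[ℝ] X) : ℝ :=
  sSup {r : ℝ | ∃ (x : X) (f : X →L[ℝ] ℝ),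
    ‖x‖ = 1 ∧ ‖f‖ = 1 ∧ f x = 1 ∧ r = |f (T x)|}

/-- `X` has the Bishop–Phelps–Bollobás property for numerical radius. -/
def HasBPBnu (X : Type*) [NormedAddCommGroup X] [NormedSpace ℝ X] : Prop :=
  ∀ ε : ℝ, 0 < ε → ∃ η : ℝ, 0 < η ∧
    ∀ (T : X →L[ℝ] X) (x : X) (f : X →L[ℝ] ℝ),
      NumRadius T = 1 → ‖x‖ = 1 → ‖f‖ = 1 → f x = 1 → 1 - η < |f (T x)| →
      ∃ (S : X →L[ℝ] X) (x₀ : X) (f₀ : X →L[ℝ] ℝ),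
        NumRadius S = 1 ∧ ‖x₀‖ = 1 ∧ ‖f₀‖ = 1 ∧ f₀ x₀ = 1 ∧
        |f₀ (S x₀)| = 1 ∧ ‖f₀ - f‖ < ε ∧ ‖x₀ - x‖ < ε ∧ ‖S - T‖ < ε

/-!
An operator `T` on `W` extends to `T ⊕ 0` on `X` without changing its numerical radius: a state
`(x, x*)` of `X` splits into aligned parts, `x*_W(x_W) = ‖x*_W‖ ‖x_W‖`, and by duality
`‖x*_W‖ ‖x_W‖ + ‖x*_Z‖ ‖x_Z‖ = 1`. The BPBp-nu of `X` applied to `T ⊕ 0` at the lifted state gives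
`S` attaining its numerical radius at a state `(x₀, x₀*)` with small `Z`-parts. The type of `N`
makes one of them vanish: a vertex at `(1, 0)` (type 1) forces `x₀_Z = 0` once `‖x₀*_Z‖ < K`, and
a flat face through `(1, 0)` (type ∞) forces `x₀*_Z = 0` once `‖x₀_Z‖ < b₀`. Then `(x₀_W, x₀*_W)`
is a state of `W`, and `S` is compressed to `W` as `P_W S I_W` plus the rank-one correction
`(x₀*_Z ∘ P_Z S I_W) ⊗ x₀_W` (type 1), or as `P_W S J` with the isometric embedding
`J w = (w, x₀*_W(w) x₀_Z)` through `x₀` (type ∞). The compression has numerical radius one, attains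
it at `(x₀_W, x₀*_W)` and lies within `2 ‖S - T ⊕ 0‖` of `T`.
-/

namespace IsAbsoluteNorm

variable {N : ℝ → ℝ → ℝ}

theorem swap (hN : IsAbsoluteNorm N) : IsAbsoluteNorm fun s t => N t s where
  nonneg s t := hN.nonneg t s
  eq_zero_iff s t := (hN.eq_zero_iff t s).trans and_comm
  triangle s₁ t₁ s₂ t₂ := hN.triangle t₁ s₁ t₂ s₂
  smul c s t := hN.smul c t s
  one_zero := hN.zero_one
  zero_one := hN.one_zero
  abs_eq s t := hN.abs_eq t s

theorem apply_zero_right (hN : IsAbsoluteNorm N) (s : ℝ) : N s 0 = |s| := by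
  simpa [hN.one_zero] using hN.smul s 1 0

theorem apply_neg_right (hN : IsAbsoluteNorm N) (s t : ℝ) : N s (-t) = N s t := by
  rw [hN.abs_eq, abs_neg, ← hN.abs_eq]

/-- `t ↦ N s t` is convex and even, so on `[-t', t']` it is largest at `±t'`. -/
theorem mono_right (hN : IsAbsoluteNorm N) {s t t' : ℝ} (ht : 0 ≤ t) (htt' : t ≤ t') :
    N s t ≤ N s t' := by
  obtain rfl | ht' := (ht.trans htt').eq_or_lt
  · rw [le_antisymm htt' ht]
  have hp : 0 ≤ t' + t := by linarith
  have hm : 0 ≤ t' - t := by linarith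
  have key : 2 * t' * N s t ≤ 2 * t' * N s t' := calc
    2 * t' * N s t = N ((t' + t) * s + (t' - t) * s) ((t' + t) * t' + (t' - t) * -t') := by
      rw [← abs_of_pos (by positivity : 0 < 2 * t'), ← hN.smul]
      congr 1 <;> ring
    _ ≤ (t' + t) * N s t' + (t' - t) * N s (-t') := by
      have := hN.triangle ((t' + t) * s) ((t' + t) * t') ((t' - t) * s) ((t' - t) * -t')
      rwa [hN.smul, hN.smul, abs_of_nonneg hp, abs_of_nonneg hm] at this
    _ = 2 * t' * N s t' := by rw [hN.apply_neg_right]; ring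
  exact le_of_mul_le_mul_left key (by positivity)

theorem mono (hN : IsAbsoluteNorm N) {s s' t t' : ℝ} (hs : 0 ≤ s) (hss' : s ≤ s') (ht : 0 ≤ t)
    (htt' : t ≤ t') : N s t ≤ N s' t' :=
  (hN.swap.mono_right hs hss').trans (hN.mono_right ht htt')

theorem le_apply_left (hN : IsAbsoluteNorm N) {s t : ℝ} (hs : 0 ≤ s) (ht : 0 ≤ t) : s ≤ N s t := by
  simpa [hN.apply_zero_right, abs_of_nonneg hs] using hN.mono_right (s := s) le_rfl ht

theorem le_apply_right (hN : IsAbsoluteNorm N) {s t : ℝ} (hs : 0 ≤ s) (ht : 0 ≤ t) : t ≤ N s t :=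
  hN.swap.le_apply_left ht hs

theorem apply_one_eq_one_of_le (hN : IsAbsoluteNorm N) {b t : ℝ} (hb : N 1 b = 1) (ht : 0 ≤ t)
    (htb : t ≤ b) : N 1 t = 1 :=
  le_antisymm ((hN.mono_right ht htb).trans hb.le) (hN.le_apply_left zero_le_one ht)

end IsAbsoluteNorm

section NumRadius

variable {X Y : Type*} [NormedAddCommGroup X] [NormedSpace ℝ X]
  [NormedAddCommGroup Y] [NormedSpace ℝ Y]

/-- `(x, f) ∈ Π(X)`. -/
def IsNormingPair (x : X) (f : X →L[ℝ] ℝ) : Prop :=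
  ‖x‖ = 1 ∧ ‖f‖ = 1 ∧ f x = 1

theorem IsNormingPair.of_norm_le {x : X} {f : X →L[ℝ] ℝ} (hx : ‖x‖ = 1) (hf : ‖f‖ ≤ 1)
    (hfx : f x = 1) : IsNormingPair x f :=
  ⟨hx, le_antisymm hf (by simpa [hx, hfx] using f.le_opNorm x), hfx⟩

theorem IsNormingPair.abs_apply_le_numRadius {x : X} {f : X →L[ℝ] ℝ} (hp : IsNormingPair x f)
    (T : X →L[ℝ] X) : |f (T x)| ≤ NumRadius T := by
  refine le_csSup ⟨‖T‖, ?_⟩ ⟨x, f, hp.1, hp.2.1, hp.2.2, rfl⟩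
  rintro _ ⟨y, g, hy, hg, -, rfl⟩
  calc |g (T y)| ≤ ‖g‖ * ‖T y‖ := g.le_opNorm (T y)
    _ ≤ ‖g‖ * (‖T‖ * ‖y‖) := by gcongr; exact T.le_opNorm y
    _ = ‖T‖ := by rw [hy, hg]; ring

theorem numRadius_nonneg (T : X →L[ℝ] X) : 0 ≤ NumRadius T :=
  Real.sSup_nonneg (by rintro _ ⟨x, f, -, -, -, rfl⟩; exact abs_nonneg _)

theorem numRadius_le {T : X →L[ℝ] X} {c : ℝ} (hc : 0 ≤ c)
    (H : ∀ x f, IsNormingPair x f → |f (T x)| ≤ c) : NumRadius T ≤ c :=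
  Real.sSup_le (by rintro _ ⟨x, f, hx, hf, hfx, rfl⟩; exact H x f ⟨hx, hf, hfx⟩) hc

theorem numRadius_le_numRadius_of_forall {A : Y →L[ℝ] Y} {S : X →L[ℝ] X}
    (H : ∀ u u', IsNormingPair u u' → ∃ x x', IsNormingPair x x' ∧ u' (A u) = x' (S x)) :
    NumRadius A ≤ NumRadius S := by
  refine numRadius_le (numRadius_nonneg S) fun u u' hp => ?_
  obtain ⟨x, x', hp', hAS⟩ := H u u' hp
  exact hAS ▸ hp'.abs_apply_le_numRadius S

theorem IsNormingPair.numRadius_eq_one {x : X} {f : X →L[ℝ] ℝ} (hp : IsNormingPair x f)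
    {T : X →L[ℝ] X} (hT : NumRadius T ≤ 1) (hTx : |f (T x)| = 1) : NumRadius T = 1 :=
  le_antisymm hT (hTx ▸ hp.abs_apply_le_numRadius T)

theorem abs_apply_le_numRadius_mul (T : X →L[ℝ] X) {x : X} {f : X →L[ℝ] ℝ}
    (hfx : f x = ‖f‖ * ‖x‖) : |f (T x)| ≤ NumRadius T * (‖f‖ * ‖x‖) := by
  rcases eq_or_ne x 0 with rfl | hx
  · simp
  rcases eq_or_ne f 0 with rfl | hf
  · simp
  have hx' : 0 < ‖x‖ := norm_pos_iff.2 hx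
  have hf' : 0 < ‖f‖ := norm_pos_iff.2 hf
  have hp : IsNormingPair (‖x‖⁻¹ • x) (‖f‖⁻¹ • f) := by
    refine .of_norm_le ?_ ?_ ?_
    · rw [norm_smul, norm_inv, norm_norm, inv_mul_cancel₀ hx'.ne']
    · rw [norm_smul, norm_inv, norm_norm, inv_mul_cancel₀ hf'.ne']
    · simp only [smul_apply, map_smul, smul_eq_mul, hfx]
      field_simp
  have := hp.abs_apply_le_numRadius T
  simp only [smul_apply, map_smul, smul_eq_mul, abs_mul, abs_inv, abs_norm] at this
  rw [← mul_assoc, ← mul_inv, inv_mul_le_iff₀ (by positivity)] at this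
  linarith

end NumRadius

theorem ContinuousLinearMap.norm_le_of_forall_apply_le {E : Type*} [NormedAddCommGroup E]
    [NormedSpace ℝ E] (f : E →L[ℝ] ℝ) {c : ℝ} (H : ∀ x, ‖x‖ ≤ 1 → f x ≤ c) : ‖f‖ ≤ c := by
  refine f.opNorm_le_of_unit_norm (by simpa using H 0 (by simp)) fun x hx => ?_
  have hneg := H (-x) (by rw [norm_neg, hx])
  rw [map_neg] at hneg
  exact abs_le.2 ⟨by linarith, H x hx.le⟩

section AbsoluteSum

variable {W Z X : Type*} [NormedAddCommGroup W] [NormedSpace ℝ W]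
  [NormedAddCommGroup Z] [NormedSpace ℝ Z] [NormedAddCommGroup X] [NormedSpace ℝ X]

structure IsAbsoluteSum (N : ℝ → ℝ → ℝ) (e : X ≃L[ℝ] W × Z) : Prop where
  absoluteNorm : IsAbsoluteNorm N
  norm_eq : ∀ x : X, ‖x‖ = N ‖(e x).1‖ ‖(e x).2‖

variable (e : X ≃L[ℝ] W × Z)

noncomputable def projW : X →L[ℝ] W := (ContinuousLinearMap.fst ℝ W Z).comp (e : X →L[ℝ] W × Z)

noncomputable def projZ : X →L[ℝ] Z := (ContinuousLinearMap.snd ℝ W Z).comp (e : X →L[ℝ] W × Z)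

noncomputable def inclW : W →L[ℝ] X := (e.symm : W × Z →L[ℝ] X).comp (.inl ℝ W Z)

noncomputable def inclZ : Z →L[ℝ] X := (e.symm : W × Z →L[ℝ] X).comp (.inr ℝ W Z)

noncomputable def extendOp (T : W →L[ℝ] W) : X →L[ℝ] X := (inclW e).comp (T.comp (projW e))

@[simp] theorem projW_apply (x : X) : projW e x = (e x).1 := rfl

@[simp] theorem projZ_apply (x : X) : projZ e x = (e x).2 := rfl

@[simp] theorem inclW_apply (w : W) : inclW e w = e.symm (w, 0) := rfl

@[simp] theorem inclZ_apply (z : Z) : inclZ e z = e.symm (0, z) := rfl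

@[simp] theorem extendOp_apply (T : W →L[ℝ] W) (x : X) :
    extendOp e T x = inclW e (T (projW e x)) := rfl

theorem inclW_projW_add_inclZ_projZ (x : X) : inclW e (projW e x) + inclZ e (projZ e x) = x := by
  simp [← map_add]

theorem symm_apply_eq_inclW_add_inclZ (w : W) (z : Z) :
    e.symm (w, z) = inclW e w + inclZ e z := by
  simp [← map_add]

theorem map_eq_comp_inclW_add_comp_inclZ (f : X →L[ℝ] ℝ) (x : X) :
    f x = f.comp (inclW e) (projW e x) + f.comp (inclZ e) (projZ e x) := by
  rw [ContinuousLinearMap.comp_apply, ContinuousLinearMap.comp_apply, ← map_add,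
    ← symm_apply_eq_inclW_add_inclZ]
  simp

variable {e}

namespace IsAbsoluteSum

variable {N : ℝ → ℝ → ℝ}

theorem norm_symm_apply (hX : IsAbsoluteSum N e) (w : W) (z : Z) :
    ‖e.symm (w, z)‖ = N ‖w‖ ‖z‖ := by
  simp [hX.norm_eq]

theorem norm_eq_projW_projZ (hX : IsAbsoluteSum N e) (x : X) :
    ‖x‖ = N ‖projW e x‖ ‖projZ e x‖ :=
  hX.norm_eq x

theorem norm_inclW (hX : IsAbsoluteSum N e) (w : W) : ‖inclW e w‖ = ‖w‖ := by
  simp [hX.norm_symm_apply, hX.absoluteNorm.apply_zero_right]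

theorem norm_inclZ (hX : IsAbsoluteSum N e) (z : Z) : ‖inclZ e z‖ = ‖z‖ := by
  simp [hX.norm_symm_apply, hX.absoluteNorm.swap.apply_zero_right]

theorem norm_projW_apply_le (hX : IsAbsoluteSum N e) (x : X) : ‖projW e x‖ ≤ ‖x‖ :=
  hX.norm_eq x ▸ hX.absoluteNorm.le_apply_left (norm_nonneg _) (norm_nonneg _)

theorem norm_projZ_apply_le (hX : IsAbsoluteSum N e) (x : X) : ‖projZ e x‖ ≤ ‖x‖ :=
  hX.norm_eq x ▸ hX.absoluteNorm.le_apply_right (norm_nonneg _) (norm_nonneg _)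

theorem norm_projW_le (hX : IsAbsoluteSum N e) : ‖projW e‖ ≤ 1 :=
  (projW e).opNorm_le_bound zero_le_one fun x => by rw [one_mul]; exact hX.norm_projW_apply_le x

theorem norm_inclW_le (hX : IsAbsoluteSum N e) : ‖inclW e‖ ≤ 1 :=
  (inclW e).opNorm_le_bound zero_le_one fun w => by rw [hX.norm_inclW, one_mul]

theorem norm_inclZ_le (hX : IsAbsoluteSum N e) : ‖inclZ e‖ ≤ 1 :=
  (inclZ e).opNorm_le_bound zero_le_one fun z => by rw [hX.norm_inclZ, one_mul]


theorem norm_comp_inclW_le {F : Type*} [NormedAddCommGroup F] [NormedSpace ℝ F]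
    (hX : IsAbsoluteSum N e) (f : X →L[ℝ] F) : ‖f.comp (inclW e)‖ ≤ ‖f‖ :=
  (f.opNorm_comp_le _).trans (mul_le_of_le_one_right (norm_nonneg f) hX.norm_inclW_le)

theorem norm_comp_inclZ_le {F : Type*} [NormedAddCommGroup F] [NormedSpace ℝ F]
    (hX : IsAbsoluteSum N e) (f : X →L[ℝ] F) : ‖f.comp (inclZ e)‖ ≤ ‖f‖ :=
  (f.opNorm_comp_le _).trans (mul_le_of_le_one_right (norm_nonneg f) hX.norm_inclZ_le)

theorem norm_comp_projW_le {F : Type*} [NormedAddCommGroup F] [NormedSpace ℝ F]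
    (hX : IsAbsoluteSum N e) (g : W →L[ℝ] F) : ‖g.comp (projW e)‖ ≤ ‖g‖ :=
  (g.opNorm_comp_le _).trans (mul_le_of_le_one_right (norm_nonneg g) hX.norm_projW_le)

theorem mul_norm_comp_inclW_add_mul_norm_comp_inclZ_le (hX : IsAbsoluteSum N e)
    (f : X →L[ℝ] ℝ) {s t : ℝ} (hs : 0 ≤ s) (ht : 0 ≤ t) :
    s * ‖f.comp (inclW e)‖ + t * ‖f.comp (inclZ e)‖ ≤ ‖f‖ * N s t := by
  have key : ∀ w z, ‖w‖ ≤ 1 → ‖z‖ ≤ 1 →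
      s * f.comp (inclW e) w + t * f.comp (inclZ e) z ≤ ‖f‖ * N s t := by
    intro w z hw hz
    have hnorm : ‖e.symm (s • w, t • z)‖ ≤ N s t := by
      rw [hX.norm_symm_apply, norm_smul_of_nonneg hs, norm_smul_of_nonneg ht]
      exact hX.absoluteNorm.mono (by positivity) (mul_le_of_le_one_right hs hw) (by positivity)
        (mul_le_of_le_one_right ht hz)
    calc s * f.comp (inclW e) w + t * f.comp (inclZ e) z = f (e.symm (s • w, t • z)) := by
          rw [symm_apply_eq_inclW_add_inclZ, map_add, map_smul, map_smul, map_smul, map_smul,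
            smul_eq_mul, smul_eq_mul]
          rfl
      _ ≤ ‖f‖ * ‖e.symm (s • w, t • z)‖ := (le_abs_self _).trans (f.le_opNorm _)
      _ ≤ ‖f‖ * N s t := by gcongr
  have hW : ∀ z, ‖z‖ ≤ 1 → s * ‖f.comp (inclW e)‖ ≤ ‖f‖ * N s t - t * f.comp (inclZ e) z := by
    intro z hz
    rw [← norm_smul_of_nonneg hs]
    refine ContinuousLinearMap.norm_le_of_forall_apply_le _ fun w hw => ?_
    have := key w z hw hz
    simp only [smul_apply, smul_eq_mul]
    linarith
  have hZ : t * ‖f.comp (inclZ e)‖ ≤ ‖f‖ * N s t - s * ‖f.comp (inclW e)‖ := by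
    rw [← norm_smul_of_nonneg ht]
    refine ContinuousLinearMap.norm_le_of_forall_apply_le _ fun z hz => ?_
    have := hW z hz
    simp only [smul_apply, smul_eq_mul]
    linarith
  linarith

variable {x : X} {f : X →L[ℝ] ℝ}

theorem norm_mul_norm_add_norm_mul_norm_eq_one (hX : IsAbsoluteSum N e)
    (hp : IsNormingPair x f) :
    ‖f.comp (inclW e)‖ * ‖projW e x‖ + ‖f.comp (inclZ e)‖ * ‖projZ e x‖ = 1 := by
  refine le_antisymm ?_ ?_
  · have := hX.mul_norm_comp_inclW_add_mul_norm_comp_inclZ_le f (norm_nonneg (projW e x))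
      (norm_nonneg (projZ e x))
    have hN : N ‖projW e x‖ ‖projZ e x‖ = 1 := (hX.norm_eq_projW_projZ x).symm.trans hp.1
    rw [hN, hp.2.1] at this
    linarith
  · calc 1 = f.comp (inclW e) (projW e x) + f.comp (inclZ e) (projZ e x) := by
          rw [← map_eq_comp_inclW_add_comp_inclZ, hp.2.2]
      _ ≤ _ := add_le_add ((le_abs_self _).trans ((f.comp (inclW e)).le_opNorm _))
          ((le_abs_self _).trans ((f.comp (inclZ e)).le_opNorm _))

theorem comp_inclW_apply_projW (hX : IsAbsoluteSum N e) (hp : IsNormingPair x f) :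
    f.comp (inclW e) (projW e x) = ‖f.comp (inclW e)‖ * ‖projW e x‖ := by
  have hsum := hX.norm_mul_norm_add_norm_mul_norm_eq_one hp
  have hW := (le_abs_self _).trans ((f.comp (inclW e)).le_opNorm (projW e x))
  have hZ := (le_abs_self _).trans ((f.comp (inclZ e)).le_opNorm (projZ e x))
  have hsplit := map_eq_comp_inclW_add_comp_inclZ e f x
  rw [hp.2.2] at hsplit
  linarith

theorem isNormingPair_projW (hX : IsAbsoluteSum N e) (hp : IsNormingPair x f)
    (hZ : ‖f.comp (inclZ e)‖ * ‖projZ e x‖ = 0) :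
    IsNormingPair (projW e x) (f.comp (inclW e)) := by
  have hW : ‖f.comp (inclW e)‖ * ‖projW e x‖ = 1 := by
    linarith [hX.norm_mul_norm_add_norm_mul_norm_eq_one hp]
  have hf : ‖f.comp (inclW e)‖ ≤ 1 := hp.2.1 ▸ hX.norm_comp_inclW_le f
  have hx : ‖projW e x‖ ≤ 1 := hp.1 ▸ hX.norm_projW_apply_le x
  have hx' : ‖projW e x‖ = 1 :=
    le_antisymm hx (by nlinarith [mul_le_mul_of_nonneg_right hf (norm_nonneg (projW e x))])
  exact .of_norm_le hx' hf (by rw [hX.comp_inclW_apply_projW hp, hW])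

theorem isNormingPair_comp_projW (hX : IsAbsoluteSum N e) {w : W} {g : W →L[ℝ] ℝ}
    (hp : IsNormingPair w g) (hx : ‖x‖ = 1) (hxw : projW e x = w) :
    IsNormingPair x (g.comp (projW e)) :=
  .of_norm_le hx ((hX.norm_comp_projW_le g).trans hp.2.1.le)
    (by rw [ContinuousLinearMap.comp_apply, hxw, hp.2.2])

theorem numRadius_extendOp (hX : IsAbsoluteSum N e) (T : W →L[ℝ] W) :
    NumRadius (extendOp e T) = NumRadius T := by
  refine le_antisymm (numRadius_le (numRadius_nonneg T) fun y g hp => ?_) ?_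
  · have hprod : ‖g.comp (inclW e)‖ * ‖projW e y‖ ≤ 1 := by
      have := hX.norm_mul_norm_add_norm_mul_norm_eq_one hp
      nlinarith [norm_nonneg (g.comp (inclZ e)), norm_nonneg (projZ e y)]
    calc |g (extendOp e T y)| = |g.comp (inclW e) (T (projW e y))| := rfl
      _ ≤ NumRadius T * (‖g.comp (inclW e)‖ * ‖projW e y‖) :=
          abs_apply_le_numRadius_mul T (hX.comp_inclW_apply_projW hp)
      _ ≤ NumRadius T := mul_le_of_le_one_right (numRadius_nonneg T) hprod
  · refine numRadius_le_numRadius_of_forall fun w g hp => ⟨inclW e w, g.comp (projW e),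
      hX.isNormingPair_comp_projW hp (by rw [hX.norm_inclW, hp.1]) (by simp), by simp⟩

theorem norm_projW_sub_le (hX : IsAbsoluteSum N e) (x : X) (w : W) :
    ‖projW e x - w‖ ≤ ‖x - inclW e w‖ := by
  simpa using hX.norm_projW_apply_le (x - inclW e w)

theorem norm_projZ_le_norm_sub (hX : IsAbsoluteSum N e) (x : X) (w : W) :
    ‖projZ e x‖ ≤ ‖x - inclW e w‖ := by
  simpa using hX.norm_projZ_apply_le (x - inclW e w)

theorem norm_comp_inclW_sub_le (hX : IsAbsoluteSum N e) (f : X →L[ℝ] ℝ) (g : W →L[ℝ] ℝ) :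
    ‖f.comp (inclW e) - g‖ ≤ ‖f - g.comp (projW e)‖ := by
  have : f.comp (inclW e) - g = (f - g.comp (projW e)).comp (inclW e) := by ext; simp
  exact this ▸ hX.norm_comp_inclW_le _

theorem norm_comp_inclZ_le_norm_sub (hX : IsAbsoluteSum N e) (f : X →L[ℝ] ℝ)
    (g : W →L[ℝ] ℝ) : ‖f.comp (inclZ e)‖ ≤ ‖f - g.comp (projW e)‖ := by
  have : f.comp (inclZ e) = (f - g.comp (projW e)).comp (inclZ e) := by ext; simp
  exact this ▸ hX.norm_comp_inclZ_le _

end IsAbsoluteSum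

end AbsoluteSum

section Descent

variable {W Z X : Type*} [NormedAddCommGroup W] [NormedSpace ℝ W]
  [NormedAddCommGroup Z] [NormedSpace ℝ Z] [NormedAddCommGroup X] [NormedSpace ℝ X]

/-- Numerical-radius-attaining operators on `W ⊕_N Z`, at pairs whose `Z`-parts are smaller
than `c`, can be pushed down to `W` at the cost of at most doubling their distance to an
operator `T ⊕ 0`. -/
def NumRadiusDescends (e : X ≃L[ℝ] W × Z) (c : ℝ) : Prop :=
  ∀ (S : X →L[ℝ] X) (x₀ : X) (f₀ : X →L[ℝ] ℝ), NumRadius S = 1 → IsNormingPair x₀ f₀ →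
    |f₀ (S x₀)| = 1 → ‖f₀.comp (inclZ e)‖ < c → ‖projZ e x₀‖ < c →
    IsNormingPair (projW e x₀) (f₀.comp (inclW e)) ∧
      ∃ A : W →L[ℝ] W, NumRadius A = 1 ∧ |f₀.comp (inclW e) (A (projW e x₀))| = 1 ∧
        ∀ T : W →L[ℝ] W, ‖A - T‖ ≤ 2 * ‖S - extendOp e T‖

variable (e : X ≃L[ℝ] W × Z)

noncomputable def descendOp (ψ : Z →L[ℝ] ℝ) (w₀ : W) (S : X →L[ℝ] X) : W →L[ℝ] W :=
  (projW e).comp (S.comp (inclW e)) + (ψ.comp ((projZ e).comp (S.comp (inclW e)))).smulRight w₀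

@[simp] theorem descendOp_apply (ψ : Z →L[ℝ] ℝ) (w₀ : W) (S : X →L[ℝ] X) (w : W) :
    descendOp e ψ w₀ S w = projW e (S (inclW e w)) + ψ (projZ e (S (inclW e w))) • w₀ :=
  rfl

theorem descendOp_sub (ψ : Z →L[ℝ] ℝ) (w₀ : W) (S S' : X →L[ℝ] X) :
    descendOp e ψ w₀ (S - S') = descendOp e ψ w₀ S - descendOp e ψ w₀ S' := by
  ext w
  simp only [descendOp_apply, sub_apply, map_sub, sub_smul]
  abel

@[simp] theorem descendOp_extendOp (ψ : Z →L[ℝ] ℝ) (w₀ : W) (T : W →L[ℝ] W) :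
    descendOp e ψ w₀ (extendOp e T) = T := by
  ext w
  simp

/-- `w ↦ e⁻¹ (w, φ w • z₀)`: an isometric copy of `W` through `e⁻¹ (w₀, z₀)` when
`φ w₀ = 1 = ‖φ‖` and `N 1 ‖z₀‖ = 1`. -/
noncomputable def graphIncl (φ : W →L[ℝ] ℝ) (z₀ : Z) : W →L[ℝ] X :=
  inclW e + φ.smulRight (inclZ e z₀)

theorem graphIncl_apply (φ : W →L[ℝ] ℝ) (z₀ : Z) (w : W) :
    graphIncl e φ z₀ w = e.symm (w, φ w • z₀) := by
  rw [symm_apply_eq_inclW_add_inclZ, map_smul]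
  rfl

@[simp] theorem projW_graphIncl (φ : W →L[ℝ] ℝ) (z₀ : Z) (w : W) :
    projW e (graphIncl e φ z₀ w) = w := by
  simp [graphIncl_apply]

variable {e} {N : ℝ → ℝ → ℝ}

namespace IsAbsoluteSum

section TypeOne

variable {K : ℝ}

theorem norm_comp_projW_add_comp_projZ_le (hX : IsAbsoluteSum N e)
    (hK : ∀ s t : ℝ, |s| + K * |t| ≤ N s t) {φ : W →L[ℝ] ℝ} {ψ : Z →L[ℝ] ℝ} (hφ : ‖φ‖ ≤ 1)
    (hψ : ‖ψ‖ ≤ K) : ‖φ.comp (projW e) + ψ.comp (projZ e)‖ ≤ 1 := by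
  refine ContinuousLinearMap.opNorm_le_bound _ zero_le_one fun x => ?_
  calc ‖φ (projW e x) + ψ (projZ e x)‖ ≤ ‖φ‖ * ‖projW e x‖ + ‖ψ‖ * ‖projZ e x‖ :=
        (norm_add_le _ _).trans (add_le_add (φ.le_opNorm _) (ψ.le_opNorm _))
    _ ≤ ‖projW e x‖ + K * ‖projZ e x‖ := add_le_add (mul_le_of_le_one_left (norm_nonneg _) hφ)
        (mul_le_mul_of_nonneg_right hψ (norm_nonneg _))
    _ ≤ 1 * ‖x‖ := by simpa [hX.norm_eq_projW_projZ x] using hK ‖projW e x‖ ‖projZ e x‖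

theorem projZ_eq_zero_of_typeOne (hX : IsAbsoluteSum N e) (hK : ∀ s t : ℝ, |s| + K * |t| ≤ N s t)
    {x : X} {f : X →L[ℝ] ℝ} (hp : IsNormingPair x f) (hψ : ‖f.comp (inclZ e)‖ < K) :
    projZ e x = 0 := by
  have hsum := hX.norm_mul_norm_add_norm_mul_norm_eq_one hp
  have hKx := hK ‖projW e x‖ ‖projZ e x‖
  rw [abs_norm, abs_norm, ← hX.norm_eq_projW_projZ, hp.1] at hKx
  have hφ : ‖f.comp (inclW e)‖ * ‖projW e x‖ ≤ ‖projW e x‖ :=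
    mul_le_of_le_one_left (norm_nonneg _) (hp.2.1 ▸ hX.norm_comp_inclW_le f)
  have : (K - ‖f.comp (inclZ e)‖) * ‖projZ e x‖ ≤ 0 := by linarith
  exact norm_le_zero_iff.1 (nonpos_of_mul_nonpos_right this (sub_pos.2 hψ))

theorem numRadius_descendOp_le (hX : IsAbsoluteSum N e) (hK : ∀ s t : ℝ, |s| + K * |t| ≤ N s t)
    {ψ : Z →L[ℝ] ℝ} {w₀ : W} (hψ : ‖ψ‖ ≤ K) (hw₀ : ‖w₀‖ ≤ 1) (S : X →L[ℝ] X) :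
    NumRadius (descendOp e ψ w₀ S) ≤ NumRadius S := by
  refine numRadius_le_numRadius_of_forall fun w g hp =>
    ⟨inclW e w, g.comp (projW e) + (g w₀ • ψ).comp (projZ e), .of_norm_le ?_ ?_ ?_, ?_⟩
  · rw [hX.norm_inclW, hp.1]
  · refine hX.norm_comp_projW_add_comp_projZ_le hK hp.2.1.le ?_
    have hgw₀ : ‖g w₀‖ ≤ 1 := (g.le_opNorm w₀).trans (by rw [hp.2.1, one_mul]; exact hw₀)
    calc ‖g w₀ • ψ‖ = ‖g w₀‖ * ‖ψ‖ := norm_smul _ _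
      _ ≤ 1 * K := mul_le_mul hgw₀ hψ (norm_nonneg _) zero_le_one
      _ = K := one_mul K
  · simp [hp.2.2]
  · simp [mul_comm]

theorem norm_descendOp_le (hX : IsAbsoluteSum N e) {ψ : Z →L[ℝ] ℝ} {w₀ : W} (hψ : ‖ψ‖ ≤ 1)
    (hw₀ : ‖w₀‖ ≤ 1) (S : X →L[ℝ] X) : ‖descendOp e ψ w₀ S‖ ≤ 2 * ‖S‖ := by
  refine ContinuousLinearMap.opNorm_le_bound _ (by positivity) fun w => ?_
  set y := S (inclW e w)
  have hy : ‖y‖ ≤ ‖S‖ * ‖w‖ := (S.le_opNorm _).trans_eq (by rw [hX.norm_inclW])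
  have hψy : ‖ψ (projZ e y)‖ ≤ ‖y‖ :=
    (ψ.le_opNorm _).trans (mul_le_of_le_one_left (norm_nonneg _) hψ |>.trans
      (hX.norm_projZ_apply_le y))
  calc ‖descendOp e ψ w₀ S w‖ ≤ ‖projW e y‖ + ‖ψ (projZ e y)‖ * ‖w₀‖ := by
        rw [descendOp_apply, ← norm_smul]
        exact norm_add_le _ _
    _ ≤ ‖y‖ + ‖y‖ * 1 := by gcongr; exact hX.norm_projW_apply_le y
    _ ≤ 2 * ‖S‖ * ‖w‖ := by linarith

theorem numRadiusDescends_of_typeOne (hX : IsAbsoluteSum N e)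
    (hK : ∀ s t : ℝ, |s| + K * |t| ≤ N s t) : NumRadiusDescends e K := by
  intro S x₀ f₀ hS hp hSx₀ hψ _
  have hz₀ : projZ e x₀ = 0 := hX.projZ_eq_zero_of_typeOne hK hp hψ
  have hp₀ := hX.isNormingPair_projW hp (by simp [hz₀])
  have hx₀ : inclW e (projW e x₀) = x₀ := by
    have := inclW_projW_add_inclZ_projZ e x₀
    rwa [hz₀, map_zero, add_zero] at this
  have hattain : |f₀.comp (inclW e) (descendOp e (f₀.comp (inclZ e)) (projW e x₀) S
      (projW e x₀))| = 1 := by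
    rw [descendOp_apply, hx₀, map_add, map_smul, hp₀.2.2, smul_eq_mul, mul_one,
      ← map_eq_comp_inclW_add_comp_inclZ, hSx₀]
  refine ⟨hp₀, _, hp₀.numRadius_eq_one ?_ hattain, hattain, fun T => ?_⟩
  · exact hS ▸ hX.numRadius_descendOp_le hK hψ.le hp₀.1.le S
  · have := hX.norm_descendOp_le (hp.2.1 ▸ hX.norm_comp_inclZ_le f₀) hp₀.1.le (S - extendOp e T)
    rwa [descendOp_sub, descendOp_extendOp] at this

end TypeOne

section TypeInfty

variable {b : ℝ}

theorem comp_inclZ_eq_zero_of_typeInfty (hX : IsAbsoluteSum N e) (hb : N 1 b = 1) {x : X}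
    {f : X →L[ℝ] ℝ} (hp : IsNormingPair x f) (hz : ‖projZ e x‖ < b) : f.comp (inclZ e) = 0 := by
  have hb0 : 0 ≤ b := (norm_nonneg _).trans hz.le
  have hsum := hX.norm_mul_norm_add_norm_mul_norm_eq_one hp
  have hdual := hX.mul_norm_comp_inclW_add_mul_norm_comp_inclZ_le f (norm_nonneg (projW e x)) hb0
  have hN : N ‖projW e x‖ b ≤ 1 := hb ▸ hX.absoluteNorm.mono (norm_nonneg _)
    (hp.1 ▸ hX.norm_projW_apply_le x) hb0 le_rfl
  rw [hp.2.1, one_mul] at hdual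
  have : (b - ‖projZ e x‖) * ‖f.comp (inclZ e)‖ ≤ 0 := by linarith
  exact norm_le_zero_iff.1 (nonpos_of_mul_nonpos_right this (sub_pos.2 hz))

theorem norm_graphIncl (hX : IsAbsoluteSum N e) {φ : W →L[ℝ] ℝ} {z₀ : Z} (hφ : ‖φ‖ ≤ 1)
    (hz₀ : N 1 ‖z₀‖ = 1) (w : W) : ‖graphIncl e φ z₀ w‖ = ‖w‖ := by
  have hge : ‖w‖ ≤ ‖graphIncl e φ z₀ w‖ := by
    have := hX.norm_projW_apply_le (graphIncl e φ z₀ w)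
    rwa [projW_graphIncl] at this
  refine le_antisymm ?_ hge
  have hφw : ‖φ w • z₀‖ ≤ ‖w‖ * ‖z₀‖ := by
    rw [norm_smul]
    gcongr
    exact (φ.le_opNorm w).trans (mul_le_of_le_one_left (norm_nonneg _) hφ)
  calc ‖graphIncl e φ z₀ w‖ ≤ N ‖w‖ (‖w‖ * ‖z₀‖) := by
        rw [graphIncl_apply, hX.norm_symm_apply]
        exact hX.absoluteNorm.mono_right (norm_nonneg _) hφw
    _ = ‖w‖ := by
        have := hX.absoluteNorm.smul ‖w‖ 1 ‖z₀‖
        rwa [mul_one, abs_norm, hz₀, mul_one] at this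

theorem numRadiusDescends_of_typeInfty (hX : IsAbsoluteSum N e) (hb : N 1 b = 1) :
    NumRadiusDescends e b := by
  intro S x₀ f₀ hS hp hSx₀ _ hz
  have hψ : f₀.comp (inclZ e) = 0 := hX.comp_inclZ_eq_zero_of_typeInfty hb hp hz
  have hp₀ := hX.isNormingPair_projW hp (by simp [hψ])
  set J := graphIncl e (f₀.comp (inclW e)) (projZ e x₀)
  have hJ : ∀ w, ‖J w‖ = ‖w‖ := hX.norm_graphIncl hp₀.2.1.le
    (hX.absoluteNorm.apply_one_eq_one_of_le hb (norm_nonneg _) hz.le)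
  have hJx₀ : J (projW e x₀) = x₀ := by
    rw [graphIncl_apply, hp₀.2.2, one_smul]
    exact e.symm_apply_apply x₀
  have hf₀ : ∀ y, f₀ y = f₀.comp (inclW e) (projW e y) := fun y => by
    rw [map_eq_comp_inclW_add_comp_inclZ e f₀ y, hψ, zero_apply, add_zero]
  have hattain : |f₀.comp (inclW e) ((projW e).comp (S.comp J) (projW e x₀))| = 1 := by
    change |f₀.comp (inclW e) (projW e (S (J (projW e x₀))))| = 1
    rw [hJx₀, ← hf₀, hSx₀]
  refine ⟨hp₀, _, hp₀.numRadius_eq_one ?_ hattain, hattain, fun T => ?_⟩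
  · refine hS ▸ numRadius_le_numRadius_of_forall fun w g hpw => ⟨J w, g.comp (projW e),
      hX.isNormingPair_comp_projW hpw (by rw [hJ, hpw.1]) (projW_graphIncl ..), by simp⟩
  · have hsub : (projW e).comp (S.comp J) - T =
        (projW e).comp ((S - extendOp e T).comp J) := by
      ext w
      simp [J, graphIncl_apply]
    refine le_trans ?_ (le_mul_of_one_le_left (norm_nonneg _) one_le_two)
    rw [hsub]
    refine ContinuousLinearMap.opNorm_le_bound _ (norm_nonneg _) fun w => ?_
    calc ‖projW e ((S - extendOp e T) (J w))‖ ≤ ‖(S - extendOp e T) (J w)‖ :=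
          hX.norm_projW_apply_le _
      _ ≤ ‖S - extendOp e T‖ * ‖w‖ := ((S - extendOp e T).le_opNorm _).trans_eq (by rw [hJ])

end TypeInfty

end IsAbsoluteSum

end Descent

theorem bpbnu_absolute_summand_general (W Z X : Type*)
    [NormedAddCommGroup W] [NormedSpace ℝ W]
    [NormedAddCommGroup Z] [NormedSpace ℝ Z]
    [NormedAddCommGroup X] [NormedSpace ℝ X]
    (N : ℝ → ℝ → ℝ) (hN : IsAbsoluteNorm N)
    (e : X ≃L[ℝ] W × Z) (he : ∀ x : X, ‖x‖ = N ‖(e x).1‖ ‖(e x).2‖)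
    (htype : AbsNormTypeOne N ∨ AbsNormTypeInfty N)
    (h : HasBPBnu X) : HasBPBnu W := by
  have hX : IsAbsoluteSum N e := ⟨hN, he⟩
  obtain ⟨c, hc, hdesc⟩ : ∃ c > 0, NumRadiusDescends e c := by
    rcases htype with ⟨K, hK, hKN⟩ | ⟨b, hb, hbN⟩
    · exact ⟨K, hK, hX.numRadiusDescends_of_typeOne hKN⟩
    · exact ⟨b, hb, hX.numRadiusDescends_of_typeInfty hbN⟩
  intro ε hε
  set ε' := min (ε / 2) c
  have hε' : ε' ≤ ε / 2 := min_le_left _ _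
  have hc' : ε' ≤ c := min_le_right _ _
  obtain ⟨η, hη, hbpb⟩ := h ε' (by positivity)
  refine ⟨η, hη, fun T w f hT hw hf hfw hTw => ?_⟩
  have hp : IsNormingPair (inclW e w) (f.comp (projW e)) :=
    hX.isNormingPair_comp_projW ⟨hw, hf, hfw⟩ (by rw [hX.norm_inclW, hw]) (by simp)
  obtain ⟨S, x₀, f₀, hS, hx₀, hf₀, hfx₀, hSx₀, hf₀f, hx₀w, hST⟩ :=
    hbpb (extendOp e T) (inclW e w) (f.comp (projW e)) (by rw [hX.numRadius_extendOp, hT])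
      hp.1 hp.2.1 hp.2.2 (by simpa using hTw)
  obtain ⟨⟨hw₀, hg₀, hg₀w₀⟩, A, hA, hAw₀, hAT⟩ := hdesc S x₀ f₀ hS ⟨hx₀, hf₀, hfx₀⟩ hSx₀
    ((hX.norm_comp_inclZ_le_norm_sub f₀ f).trans_lt (hf₀f.trans_le hc'))
    ((hX.norm_projZ_le_norm_sub x₀ w).trans_lt (hx₀w.trans_le hc'))
  refine ⟨A, projW e x₀, f₀.comp (inclW e), hA, hw₀, hg₀, hg₀w₀, hAw₀, ?_, ?_, ?_⟩
  · linarith [hX.norm_comp_inclW_sub_le f₀ f]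
  · linarith [hX.norm_projW_sub_le x₀ w]
  · linarith [hAT T]

theorem bpbnu_absolute_summand (W Z X : Type*)
    [NormedAddCommGroup W] [NormedSpace ℝ W] [CompleteSpace W]
    [NormedAddCommGroup Z] [NormedSpace ℝ Z] [CompleteSpace Z]
    [NormedAddCommGroup X] [NormedSpace ℝ X] [CompleteSpace X]
    (N : ℝ → ℝ → ℝ) (hN : IsAbsoluteNorm N)
    (e : X ≃L[ℝ] W × Z) (he : ∀ x : X, ‖x‖ = N ‖(e x).1‖ ‖(e x).2‖)
    (htype : AbsNormTypeOne N ∨ AbsNormTypeInfty N)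
    (h : HasBPBnu X) : HasBPBnu W :=
  bpbnu_absolute_summand_general W Z X N hN e he htype h
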